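/- arXiv:2001.09323 — 3 statements merged into one kernel-verified Lean document; each statement's English description precedes it below -/
import Mathlib

section
/- Let α ∈ ℂ and let ℓ, n be natural numbers. Then Σ_{k=0}^{n} α^{n−k} C(n,k) B_{ℓ+k}^{(α)} + (−1)^{ℓ+n+1} Σ_{k=0}^{ℓ} α^{ℓ−k} C(ℓ,k) B_{n+k}^{(α)} = 0, where B_m^{(α)} = B_m^{(α)}(0) are the generalized Bernoulli numbers. -/
open scoped BigOperators
open Polynomial Finset

noncomputable section

/-- The formal power series `(e^t - 1)/t` over `ℂ` (constant term `1`). -/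
def expSub1DivT : PowerSeries ℂ := PowerSeries.mk fun n => ((n + 1).factorial : ℂ)⁻¹

/-- The formal power series `t/(e^t - 1)` over `ℂ`. -/
def bernoulliBase : PowerSeries ℂ := expSub1DivT⁻¹

/-- The formal logarithm of a power series with constant term `1`:
`log F = ∑_{k ≥ 1} (-1)^(k+1) (F-1)^k / k`, computed coefficientwise
(only the terms with `k ≤ n` contribute to the `n`-th coefficient). -/
def formalLog (F : PowerSeries ℂ) : PowerSeries ℂ :=
  PowerSeries.mk fun n =>
    ∑ k ∈ Finset.range (n + 1),
      (-1 : ℂ) ^ (k + 1) * (k : ℂ)⁻¹ * PowerSeries.coeff n ((F - 1) ^ k)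

/-- The formal exponential of a power series with zero constant term:
`exp H = ∑_{k ≥ 0} H^k / k!`, computed coefficientwise. -/
def formalExp (H : PowerSeries ℂ) : PowerSeries ℂ :=
  PowerSeries.mk fun n =>
    ∑ k ∈ Finset.range (n + 1), ((k.factorial : ℂ))⁻¹ * PowerSeries.coeff n (H ^ k)

/-- `(t/(e^t - 1))^α := exp (α • log (t/(e^t - 1)))`. -/
def bernoulliBasePow (α : ℂ) : PowerSeries ℂ := formalExp (α • formalLog bernoulliBase)

/-- The generalized Bernoulli numbers `B_n^{(α)}`, defined by
`∑ B_n^{(α)} t^n / n! = (t/(e^t-1))^α`. -/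
def genBernoulliNumber (α : ℂ) (n : ℕ) : ℂ :=
  (n.factorial : ℂ) * PowerSeries.coeff n (bernoulliBasePow α)

/-- The generalized Bernoulli polynomials `B_n^{(α)}(x)`, defined by
`∑ B_n^{(α)}(x) t^n / n! = (t/(e^t-1))^α e^{t x}`; equivalently
`B_n^{(α)}(x) = ∑_{k ≤ n} C(n,k) B_k^{(α)} x^{n-k}`. -/
def genBernoulliPoly (α : ℂ) (n : ℕ) : Polynomial ℂ :=
  ∑ k ∈ Finset.range (n + 1),
    Polynomial.C ((n.choose k : ℂ) * genBernoulliNumber α k) * Polynomial.X ^ (n - k)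

/-- `Ω_γ`: the unique `ℂ`-linear endomorphism of `ℂ[X]` with `Ω_γ (X^n) = B_n^{(γ)}(X)`. -/
def OmegaOp (γ : ℂ) (P : Polynomial ℂ) : Polynomial ℂ :=
  P.sum fun n a => Polynomial.C a * genBernoulliPoly γ n

end

/-!
Write `B = t/(e^t - 1)` and `G = B^α`. The reflection `B(-t) = B(t) e^t` lifts to
`G(-t) = G(t) e^{αt}`: both sides solve the first-order linear equation `B Y' = α (B' + B) Y`
with `Y(0) = 1`, since `G` itself satisfies `B G' = α B' G`. Reading off coefficients, the
functional `Λ : X^m ↦ B_m^{(α)}` on `ℂ[X]` satisfies `Λ (p (X + α)) = Λ (p (-X))` for every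
polynomial `p`. For `p = (X - α)^ℓ X^n` this says `Λ (X^ℓ (X + α)^n) = (-1)^(ℓ+n) Λ (X^n (X + α)^ℓ)`,
and expanding both sides binomially gives the identity.
-/

namespace PowerSeries

section CommRing

variable {R : Type*} [CommRing R]

theorem coeff_pow_eq_zero_of_constantCoeff_eq_zero {H : R⟦X⟧} (hH : constantCoeff H = 0)
    {n k : ℕ} (h : n < k) : coeff n (H ^ k) = 0 :=
  X_pow_dvd_iff.mp (pow_dvd_pow_of_dvd (X_dvd_iff.mpr hH) k) n h

theorem mk_sum_coeff_pow_eq_subst (a : ℕ → R) {H : R⟦X⟧} (hH : constantCoeff H = 0) :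
    mk (fun n => ∑ k ∈ range (n + 1), a k * coeff n (H ^ k)) = (mk a).subst H := by
  ext n
  rw [coeff_mk, coeff_subst' (HasSubst.of_constantCoeff_zero' hH),
    finsum_eq_sum_of_support_subset (s := range (n + 1))]
  · simp only [coeff_mk, smul_eq_mul]
  · intro k hk
    by_contra hkn
    exact hk (by simp [coeff_pow_eq_zero_of_constantCoeff_eq_zero hH (by simpa using hkn)])

theorem constantCoeff_rescale (r : R) (f : R⟦X⟧) :
    constantCoeff (rescale r f) = constantCoeff f := by
  rw [← coeff_zero_eq_constantCoeff_apply, ← coeff_zero_eq_constantCoeff_apply, coeff_rescale,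
    pow_zero, one_mul]

theorem rescale_C (r a : R) : rescale r (C a) = C a := by
  ext n
  rcases n with _ | n <;> simp [coeff_C]

theorem derivative_rescale (r : R) (f : R⟦X⟧) :
    d⁄dX R (rescale r f) = r • rescale r (d⁄dX R f) := by
  ext n
  simp only [coeff_derivative, coeff_rescale, coeff_smul, smul_eq_mul, pow_succ]
  ring

end CommRing

theorem eq_of_mul_derivative_eq {K : Type*} [Field K] [CharZero K] {U P G₁ G₂ : K⟦X⟧}
    (hU : U ≠ 0) (h₁ : U * d⁄dX K G₁ = P * G₁) (h₂ : U * d⁄dX K G₂ = P * G₂)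
    (hG₂ : constantCoeff G₂ ≠ 0) (h₀ : constantCoeff G₁ = constantCoeff G₂) : G₁ = G₂ := by
  have hW : d⁄dX K G₁ * G₂ = G₁ * d⁄dX K G₂ :=
    mul_left_cancel₀ hU (by linear_combination G₂ * h₁ - G₁ * h₂)
  have hinv : G₂ * G₂⁻¹ = 1 := PowerSeries.mul_inv_cancel _ hG₂
  have hquot : G₁ * G₂⁻¹ = 1 := by
    refine derivative.ext ?_ (by simp [h₀, hG₂])
    rw [Derivation.leibniz, derivative_inv', derivative_one, smul_eq_mul, smul_eq_mul]
    linear_combination G₂⁻¹ ^ 2 * hW - d⁄dX K G₁ * G₂⁻¹ * hinv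
  calc G₁ = G₁ * G₂⁻¹ * G₂ := by rw [mul_assoc, PowerSeries.inv_mul_cancel _ hG₂, mul_one]
    _ = G₂ := by rw [hquot, one_mul]

theorem exp_eq_mk : exp ℂ = mk fun k => (k.factorial : ℂ)⁻¹ := by
  ext k
  simp [coeff_exp]

noncomputable def logOneAdd : ℂ⟦X⟧ := mk fun k => (-1) ^ (k + 1) * (k : ℂ)⁻¹

theorem one_add_X_mul_derivative_logOneAdd : (1 + X) * d⁄dX ℂ logOneAdd = 1 := by
  have hD : d⁄dX ℂ logOneAdd = mk fun n => (-1) ^ n := by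
    ext n
    rw [coeff_derivative, logOneAdd, coeff_mk, coeff_mk]
    field_simp
    push_cast
    ring
  ext n
  rcases n with _ | n
  · simp [hD, coeff_zero_eq_constantCoeff_apply]
  · rw [add_mul, one_mul, map_add, coeff_succ_X_mul, hD]
    simp [pow_succ]

theorem formalExp_eq_subst {H : ℂ⟦X⟧} (hH : constantCoeff H = 0) :
    formalExp H = (exp ℂ).subst H := by
  rw [formalExp, exp_eq_mk, mk_sum_coeff_pow_eq_subst _ hH]

theorem formalLog_eq_subst {F : ℂ⟦X⟧} (hF : constantCoeff F = 1) :
    formalLog F = logOneAdd.subst (F - 1) := by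
  rw [formalLog, logOneAdd, mk_sum_coeff_pow_eq_subst _ (by simp [hF])]

theorem constantCoeff_formalExp (H : ℂ⟦X⟧) : constantCoeff (formalExp H) = 1 := by
  rw [← coeff_zero_eq_constantCoeff_apply]
  simp [formalExp]

theorem constantCoeff_formalLog (F : ℂ⟦X⟧) : constantCoeff (formalLog F) = 0 := by
  rw [← coeff_zero_eq_constantCoeff_apply]
  simp [formalLog]

theorem derivative_formalExp {H : ℂ⟦X⟧} (hH : constantCoeff H = 0) :
    d⁄dX ℂ (formalExp H) = formalExp H * d⁄dX ℂ H := by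
  rw [formalExp_eq_subst hH, derivative_subst (HasSubst.of_constantCoeff_zero' hH),
    derivative_exp]

theorem mul_derivative_formalLog {F : ℂ⟦X⟧} (hF : constantCoeff F = 1) :
    F * d⁄dX ℂ (formalLog F) = d⁄dX ℂ F := by
  have hs : HasSubst (F - 1) := HasSubst.of_constantCoeff_zero' (by simp [hF])
  have hsubst_one : (1 : ℂ⟦X⟧).subst (F - 1) = 1 := by
    rw [← map_one (C (R := ℂ)), subst_C, map_one, map_one]
  have hF_subst : F = (1 + X : ℂ⟦X⟧).subst (F - 1) := by
    rw [subst_add hs, subst_X hs, hsubst_one]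
    ring
  rw [formalLog_eq_subst hF, derivative_subst hs, map_sub, derivative_one, sub_zero, ← mul_assoc]
  nth_rw 1 [hF_subst]
  rw [← subst_mul hs, one_add_X_mul_derivative_logOneAdd, hsubst_one, one_mul]

theorem constantCoeff_expSub1DivT : constantCoeff expSub1DivT = 1 := by
  rw [← coeff_zero_eq_constantCoeff_apply]
  simp [expSub1DivT]

theorem constantCoeff_bernoulliBase : constantCoeff bernoulliBase = 1 := by
  rw [bernoulliBase, constantCoeff_inv, constantCoeff_expSub1DivT, inv_one]

theorem constantCoeff_bernoulliBasePow (α : ℂ) : constantCoeff (bernoulliBasePow α) = 1 :=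
  constantCoeff_formalExp _

theorem X_mul_expSub1DivT : X * expSub1DivT = exp ℂ - 1 := by
  ext n
  rcases n with _ | n
  · simp [coeff_zero_eq_constantCoeff_apply]
  · rw [coeff_succ_X_mul, map_sub, exp_eq_mk, expSub1DivT, coeff_mk, coeff_mk, coeff_one,
      if_neg n.succ_ne_zero, sub_zero]

theorem rescale_neg_one_expSub1DivT_mul_exp :
    rescale (-1) expSub1DivT * exp ℂ = expSub1DivT := by
  refine mul_left_cancel₀ (X_ne_zero (R := ℂ)) ?_
  have h := congrArg (rescale (-1 : ℂ)) X_mul_expSub1DivT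
  rw [map_mul, map_sub, map_one, rescale_neg_one_X] at h
  have hexp : rescale (-1 : ℂ) (exp ℂ) * exp ℂ = 1 := by
    rw [mul_comm]
    exact exp_mul_exp_neg_eq_one
  linear_combination (-exp ℂ) * h - hexp - X_mul_expSub1DivT

theorem rescale_neg_one_bernoulliBase :
    rescale (-1) bernoulliBase = bernoulliBase * exp ℂ := by
  have hBE : bernoulliBase * expSub1DivT = 1 :=
    PowerSeries.inv_mul_cancel _ (by simp [constantCoeff_expSub1DivT])
  have hE : rescale (-1 : ℂ) expSub1DivT ≠ 0 :=
    ne_zero_of_map (f := constantCoeff) (by simp [constantCoeff_rescale, constantCoeff_expSub1DivT])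
  refine mul_right_cancel₀ hE ?_
  rw [← map_mul, hBE, map_one, mul_assoc, mul_comm (exp ℂ), rescale_neg_one_expSub1DivT_mul_exp,
    hBE]

theorem bernoulliBase_mul_derivative_bernoulliBasePow (α : ℂ) :
    bernoulliBase * d⁄dX ℂ (bernoulliBasePow α) =
      C α * d⁄dX ℂ bernoulliBase * bernoulliBasePow α := by
  have hlog := mul_derivative_formalLog constantCoeff_bernoulliBase
  rw [bernoulliBasePow, derivative_formalExp (by simp [constantCoeff_formalLog]),
    Derivation.map_smul]
  simp only [smul_eq_C_mul, ← hlog]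
  ring

theorem rescale_neg_one_bernoulliBasePow (α : ℂ) :
    rescale (-1) (bernoulliBasePow α) = bernoulliBasePow α * rescale α (exp ℂ) := by
  have hode := bernoulliBase_mul_derivative_bernoulliBasePow α
  have hR (f : ℂ⟦X⟧) : rescale (-1) (d⁄dX ℂ f) = -d⁄dX ℂ (rescale (-1) f) := by
    rw [derivative_rescale, neg_one_smul, neg_neg]
  refine eq_of_mul_derivative_eq (U := bernoulliBase)
    (P := C α * (d⁄dX ℂ bernoulliBase + bernoulliBase)) ?_ ?_ ?_ ?_ ?_
  · exact ne_zero_of_map (f := constantCoeff) (by simp [constantCoeff_bernoulliBase])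
  · have h := congrArg (rescale (-1 : ℂ)) hode
    rw [map_mul, map_mul, map_mul, hR, hR, rescale_C, rescale_neg_one_bernoulliBase,
      Derivation.leibniz, derivative_exp, smul_eq_mul, smul_eq_mul] at h
    refine mul_left_cancel₀ (isUnit_exp ℂ).ne_zero ?_
    linear_combination -h
  · rw [Derivation.leibniz, derivative_rescale, derivative_exp, smul_eq_mul, smul_eq_mul,
      smul_eq_C_mul]
    linear_combination rescale α (exp ℂ) * hode
  · simp [constantCoeff_rescale, constantCoeff_bernoulliBasePow]
  · simp [constantCoeff_rescale, constantCoeff_bernoulliBasePow]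

end PowerSeries

theorem sum_pow_mul_choose_mul_genBernoulliNumber (α : ℂ) (m : ℕ) :
    ∑ k ∈ range (m + 1), α ^ (m - k) * (m.choose k : ℂ) * genBernoulliNumber α k =
      (-1) ^ m * genBernoulliNumber α m := by
  have h := congrArg (PowerSeries.coeff m) (PowerSeries.rescale_neg_one_bernoulliBasePow α)
  rw [PowerSeries.coeff_rescale, PowerSeries.coeff_mul,
    Finset.Nat.sum_antidiagonal_eq_sum_range_succ_mk] at h
  simp only [PowerSeries.coeff_rescale, PowerSeries.exp_eq_mk, PowerSeries.coeff_mk] at h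
  rw [genBernoulliNumber, mul_left_comm, h, Finset.mul_sum]
  refine Finset.sum_congr rfl fun k hk => ?_
  have hkm : k ≤ m := Nat.lt_succ_iff.mp (Finset.mem_range.mp hk)
  have hfac : (m.choose k : ℂ) * k.factorial * (m - k).factorial = m.factorial := by
    exact_mod_cast Nat.choose_mul_factorial_mul_factorial hkm
  have hfac_ne : ((m - k).factorial : ℂ) ≠ 0 := Nat.cast_ne_zero.mpr (m - k).factorial_ne_zero
  rw [genBernoulliNumber, ← hfac]
  field_simp

noncomputable def genBernoulliFunctional (α : ℂ) : ℂ[X] →ₗ[ℂ] ℂ :=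
  Polynomial.lsum fun m => LinearMap.mulRight ℂ (genBernoulliNumber α m)

theorem genBernoulliFunctional_monomial (α : ℂ) (m : ℕ) (a : ℂ) :
    genBernoulliFunctional α (monomial m a) = a * genBernoulliNumber α m := by
  simp [genBernoulliFunctional]

theorem genBernoulliFunctional_X_pow_mul_X_add_C_pow (α : ℂ) (ℓ n : ℕ) :
    genBernoulliFunctional α (X ^ ℓ * (X + C α) ^ n) =
      ∑ k ∈ range (n + 1), α ^ (n - k) * (n.choose k : ℂ) * genBernoulliNumber α (ℓ + k) := by
  rw [add_pow, Finset.mul_sum, map_sum]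
  refine Finset.sum_congr rfl fun k _ => ?_
  rw [show X ^ ℓ * (X ^ k * C α ^ (n - k) * (n.choose k : ℂ[X])) =
      monomial (ℓ + k) (α ^ (n - k) * n.choose k) by
    rw [← C_mul_X_pow_eq_monomial, pow_add]
    simp only [map_mul, map_pow, map_natCast]
    ring]
  rw [genBernoulliFunctional_monomial]

theorem genBernoulliFunctional_comp_X_add_C (α : ℂ) (p : ℂ[X]) :
    genBernoulliFunctional α (p.comp (X + C α)) = genBernoulliFunctional α (p.comp (-X)) := by
  induction p using Polynomial.induction_on' with
  | add p q hp hq => rw [add_comp, add_comp, map_add, map_add, hp, hq]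
  | monomial m a =>
    have h := genBernoulliFunctional_X_pow_mul_X_add_C_pow α 0 m
    simp only [pow_zero, one_mul, zero_add] at h
    have hneg : (-X : ℂ[X]) ^ m = monomial m ((-1) ^ m) := by
      rw [← C_mul_X_pow_eq_monomial, neg_pow, map_pow, map_neg, map_one]
    rw [monomial_comp, monomial_comp, ← smul_eq_C_mul, ← smul_eq_C_mul, map_smul, map_smul, h,
      sum_pow_mul_choose_mul_genBernoulliNumber, hneg, genBernoulliFunctional_monomial]

/-- (Corrected Neto identity.) For `α ∈ ℂ` and `ℓ, n ∈ ℕ`: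
`∑_{k=0}^{n} α^{n-k} C(n,k) B_{ℓ+k}^{(α)}
 + (-1)^{ℓ+n+1} ∑_{k=0}^{ℓ} α^{ℓ-k} C(ℓ,k) B_{n+k}^{(α)} = 0`. -/
theorem neto_identity (α : ℂ) (ℓ n : ℕ) :
    (∑ k ∈ Finset.range (n + 1),
        α ^ (n - k) * (n.choose k : ℂ) * genBernoulliNumber α (ℓ + k)) +
      (-1 : ℂ) ^ (ℓ + n + 1) *
        ∑ k ∈ Finset.range (ℓ + 1),
          α ^ (ℓ - k) * (ℓ.choose k : ℂ) * genBernoulliNumber α (n + k) = 0 := by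
  have hshift : ((X - C α) ^ ℓ * X ^ n).comp (X + C α) = X ^ ℓ * (X + C α) ^ n := by
    simp
  have hreflect : ((X - C α) ^ ℓ * X ^ n).comp (-X) =
      (-1 : ℂ) ^ (ℓ + n) • (X ^ n * (X + C α) ^ ℓ) := by
    rw [mul_comp, pow_comp, pow_comp, sub_comp, X_comp, C_comp,
      show (-X - C α : ℂ[X]) = -1 * (X + C α) by ring, show (-X : ℂ[X]) = -1 * X by ring,
      mul_pow, mul_pow, smul_eq_C_mul]
    simp only [map_pow, map_neg, map_one]
    ring
  have key := genBernoulliFunctional_comp_X_add_C α ((X - C α) ^ ℓ * X ^ n)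
  rw [hshift, hreflect, map_smul, genBernoulliFunctional_X_pow_mul_X_add_C_pow,
    genBernoulliFunctional_X_pow_mul_X_add_C_pow, smul_eq_mul] at key
  rw [key, pow_succ]
  ring
end

section
/- Let ℓ, n, r be natural numbers. Then Σ_{k=0}^{n+r} C(n+r,k) C(ℓ+k+r,r) B_{ℓ+k} + (−1)^{ℓ+n+r+1} Σ_{k=0}^{ℓ+r} C(ℓ+r,k) C(n+k+r,r) B_{n+k} = 0. -/
/-!
Let `L : ℚ[X] → ℚ` be the umbral functional `X ^ m ↦ B_m`. Since `∑ C(m,i) B_i = (-1)^m B_m`,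
`L` is invariant under the reflection `p(X) ↦ p(-1-X)`. The first sum of the identity is
`L (D_r (X^(ℓ+r) (X+1)^(n+r)))` with `D_r` the `r`-th Hasse derivative, and the second one is the
same with `ℓ` and `n` exchanged. The reflection exchanges these two polynomials up to the sign
`(-1)^(ℓ+n)` and commutes with `D_r` up to the sign `(-1)^r`.
-/

open Finset
open Polynomial hiding bernoulli

theorem sum_range_choose_mul_bernoulli (n : ℕ) :
    ∑ i ∈ range (n + 1), (n.choose i : ℚ) * bernoulli i = (-1) ^ n * bernoulli n := by
  rw [← bernoulli'_eq_bernoulli, ← Polynomial.bernoulli_eval_one, Polynomial.bernoulli,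
    eval_finsetSum]
  simp [mul_comm]

section

variable {R : Type*}

theorem iterate_derivative_comp_of_derivative_eq_C [CommSemiring R] {q : R[X]} {c : R}
    (hq : derivative q = C c) (p : R[X]) (k : ℕ) :
    derivative^[k] (p.comp q) = c ^ k • (derivative^[k] p).comp q := by
  induction k generalizing p with
  | zero => simp
  | succ k ih =>
    rw [Function.iterate_succ_apply, derivative_comp, hq, ← smul_eq_C_mul, iterate_derivative_smul,
      ih, smul_smul, pow_succ', Function.iterate_succ_apply]

theorem hasseDeriv_comp_of_derivative_eq_C {K : Type*} [Field K] [CharZero K] {q : K[X]} {c : K}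
    (hq : derivative q = C c) (k : ℕ) (p : K[X]) :
    hasseDeriv k (p.comp q) = c ^ k • (hasseDeriv k p).comp q := by
  have hk : (k.factorial : K) ≠ 0 := by exact_mod_cast k.factorial_ne_zero
  refine smul_right_injective K[X] hk ?_
  have h := congrFun (factorial_smul_hasseDeriv (R := K) (k := k))
  simp only [LinearMap.smul_apply] at h
  dsimp only
  rw [Nat.cast_smul_eq_nsmul, h, iterate_derivative_comp_of_derivative_eq_C hq,
    smul_comm (k.factorial : K), Nat.cast_smul_eq_nsmul, ← smul_comp k.factorial, h]

theorem X_pow_mul_X_add_one_pow_eq_smul_comp [CommRing R] (a b : ℕ) :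
    (X ^ b * (X + 1) ^ a : R[X]) = (-1 : R) ^ (a + b) • (X ^ a * (X + 1) ^ b).comp (-X - 1) := by
  have hsign : (-1 : R[X]) ^ (a + b) * (-1) ^ a * (-1) ^ b = 1 := by
    rw [← pow_add, ← pow_add]
    exact Even.neg_one_pow ⟨a + b, by ring⟩
  have hX : (-(X + 1) + 1 : R[X]) = -X := by ring
  have hX1 : (-X - 1 : R[X]) = -(X + 1) := by ring
  simp only [mul_comp, pow_comp, add_comp, X_comp, one_comp, smul_eq_C_mul, map_pow, map_neg,
    map_one, hX, hX1, neg_pow (X + 1 : R[X]), neg_pow (X : R[X])]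
  linear_combination -(X ^ b * (X + 1) ^ a) * hsign

end

/-- The umbral evaluation `X ^ m ↦ bernoulli m`. -/
noncomputable def bernoulliFunctional : ℚ[X] →ₗ[ℚ] ℚ :=
  lsum fun m => LinearMap.toSpanSingleton ℚ ℚ (bernoulli m)

theorem bernoulliFunctional_monomial (m : ℕ) (a : ℚ) :
    bernoulliFunctional (monomial m a) = a * bernoulli m := by
  simp [bernoulliFunctional]

theorem bernoulliFunctional_X_add_one_pow (m : ℕ) :
    bernoulliFunctional ((X + 1) ^ m) = (-1) ^ m * bernoulli m := by
  rw [add_pow, map_sum, ← sum_range_choose_mul_bernoulli]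
  refine sum_congr rfl fun i _ => ?_
  rw [one_pow, mul_one, ← C_eq_natCast, X_pow_mul_C, C_mul_X_pow_eq_monomial,
    bernoulliFunctional_monomial]

theorem bernoulliFunctional_comp_neg_X_sub_one (p : ℚ[X]) :
    bernoulliFunctional (p.comp (-X - 1)) = bernoulliFunctional p := by
  induction p using Polynomial.induction_on' with
  | add p q hp hq => rw [add_comp, map_add, map_add, hp, hq]
  | monomial m a =>
    have hpow : (-X - 1 : ℚ[X]) ^ m = (-1 : ℚ) ^ m • (X + 1) ^ m := by
      rw [smul_eq_C_mul, map_pow, map_neg, map_one, ← mul_pow]; ring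
    rw [monomial_comp, hpow, ← smul_eq_C_mul, map_smul, map_smul,
      bernoulliFunctional_X_add_one_pow, bernoulliFunctional_monomial, smul_eq_mul, smul_eq_mul,
      ← mul_assoc ((-1) ^ m), ← mul_pow]
    simp

theorem bernoulliFunctional_hasseDeriv_comp_neg_X_sub_one (r : ℕ) (p : ℚ[X]) :
    bernoulliFunctional (hasseDeriv r (p.comp (-X - 1))) =
      (-1) ^ r * bernoulliFunctional (hasseDeriv r p) := by
  rw [hasseDeriv_comp_of_derivative_eq_C (c := -1) (by simp), map_smul,
    bernoulliFunctional_comp_neg_X_sub_one, smul_eq_mul]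

theorem bernoulliFunctional_hasseDeriv_X_pow_mul_X_add_one_pow (a b r : ℕ) :
    bernoulliFunctional (hasseDeriv r (X ^ (a + r) * (X + 1) ^ b)) =
      ∑ k ∈ range (b + 1), (b.choose k : ℚ) * ((a + k + r).choose r : ℚ) * bernoulli (a + k) := by
  rw [add_pow, mul_sum, map_sum, map_sum]
  refine sum_congr rfl fun k _ => ?_
  have hterm : (X ^ (a + r) * (X ^ k * 1 ^ (b - k) * (b.choose k : ℚ[X])) : ℚ[X]) =
      monomial (a + k + r) (b.choose k : ℚ) := by
    rw [← C_mul_X_pow_eq_monomial, C_eq_natCast]; ring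
  rw [hterm, hasseDeriv_monomial, Nat.add_sub_cancel, bernoulliFunctional_monomial]
  ring

theorem bernoulliFunctional_hasseDeriv_X_pow_mul_X_add_one_pow_swap (a b r : ℕ) :
    bernoulliFunctional (hasseDeriv r (X ^ b * (X + 1) ^ a)) =
      (-1) ^ (a + b + r) * bernoulliFunctional (hasseDeriv r (X ^ a * (X + 1) ^ b)) := by
  rw [X_pow_mul_X_add_one_pow_eq_smul_comp a b, map_smul, map_smul,
    bernoulliFunctional_hasseDeriv_comp_neg_X_sub_one, smul_eq_mul, pow_add _ (a + b), mul_assoc]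

/-- Agoh's identity: `S_{n,ℓ,r}^{(1)}(1,0,0) = 0`, i.e.
`∑_{k=0}^{n+r} C(n+r,k) C(ℓ+k+r,r) B_{ℓ+k}
 + (-1)^{ℓ+n+r+1} ∑_{k=0}^{ℓ+r} C(ℓ+r,k) C(n+k+r,r) B_{n+k} = 0`. -/
theorem agoh_identity (ℓ n r : ℕ) :
    (∑ k ∈ Finset.range (n + r + 1),
        ((n + r).choose k : ℚ) * ((ℓ + k + r).choose r : ℚ) * bernoulli (ℓ + k)) +
      (-1 : ℚ) ^ (ℓ + n + r + 1) *
        ∑ k ∈ Finset.range (ℓ + r + 1),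
          ((ℓ + r).choose k : ℚ) * ((n + k + r).choose r : ℚ) * bernoulli (n + k) = 0 := by
  have hsign : (-1 : ℚ) ^ (ℓ + n + r + 1) * (-1) ^ (ℓ + r + (n + r) + r) = -1 := by
    rw [← pow_add]
    exact Odd.neg_one_pow ⟨ℓ + n + 2 * r, by ring⟩
  rw [← bernoulliFunctional_hasseDeriv_X_pow_mul_X_add_one_pow ℓ (n + r) r,
    ← bernoulliFunctional_hasseDeriv_X_pow_mul_X_add_one_pow n (ℓ + r) r,
    bernoulliFunctional_hasseDeriv_X_pow_mul_X_add_one_pow_swap (ℓ + r) (n + r) r]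
  linear_combination
    bernoulliFunctional (hasseDeriv r (X ^ (ℓ + r) * (X + 1) ^ (n + r))) * hsign
end

section
/- For every natural number n ≥ 1, one has Σ_{k=0}^{n} C(n+1,k) (n+k+1) B_{n+k} = 0. -/
/-!
Write `S(m, n) = ∑_{i ≤ m} C(m,i) a(n+i)`. Pascal's rule gives `S(m+1, n) = S(m, n) + S(m, n+1)`,
and for a sequence with `(-1)^n a(n) = ∑_{i ≤ n} C(n,i) a(i)`, such as the Bernoulli numbers,
induction on `m` turns this into the reflection `(-1)^m S(m, n) = (-1)^n S(n, m)`.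
For `m = n + 1` the reflection and Pascal's rule give `S(n, n) = 2 S(n+1, n)`, and splitting
`C(n+1,k) (n+k+1) = 2 (n+1) C(n+1,k) - (n+1) C(n,k)` turns the sum into
`2 (n+1) (S(n+1, n) - a(2n+1)) - (n+1) S(n, n) = -2 (n+1) a(2n+1)`, which vanishes for Bernoulli
numbers since `B_{2n+1} = 0` for `n ≥ 1`.
-/

open Finset

section BinomialShiftSum

variable {R : Type*} [CommRing R]

def binomialShiftSum (a : ℕ → R) (m n : ℕ) : R :=
  ∑ i ∈ range (m + 1), (m.choose i : R) * a (n + i)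

def IsBinomialSelfDual (a : ℕ → R) : Prop :=
  ∀ n, (-1) ^ n * a n = binomialShiftSum a n 0

@[simp]
theorem binomialShiftSum_zero_left (a : ℕ → R) (n : ℕ) : binomialShiftSum a 0 n = a n := by
  simp [binomialShiftSum]

theorem binomialShiftSum_succ_left (a : ℕ → R) (m n : ℕ) :
    binomialShiftSum a (m + 1) n = binomialShiftSum a m n + binomialShiftSum a m (n + 1) := by
  simp only [binomialShiftSum, add_right_comm n 1, add_assoc n _ 1]
  exact sum_choose_succ_mul (fun i _ => a (n + i)) m

theorem IsBinomialSelfDual.neg_one_pow_mul_binomialShiftSum_comm {a : ℕ → R}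
    (ha : IsBinomialSelfDual a) (m n : ℕ) :
    (-1) ^ m * binomialShiftSum a m n = (-1) ^ n * binomialShiftSum a n m := by
  induction m generalizing n with
  | zero => simp [← ha n, ← mul_assoc, ← mul_pow]
  | succ m ih =>
    have hn := ih n
    have hn' := ih (n + 1)
    rw [binomialShiftSum_succ_left] at hn' ⊢
    linear_combination -hn - hn'

theorem IsBinomialSelfDual.binomialShiftSum_self {a : ℕ → R} (ha : IsBinomialSelfDual a)
    (n : ℕ) : binomialShiftSum a n n = 2 * binomialShiftSum a (n + 1) n := by
  have hreflect : binomialShiftSum a n (n + 1) = -binomialShiftSum a (n + 1) n := by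
    have h := ha.neg_one_pow_mul_binomialShiftSum_comm (n + 1) n
    exact (isUnit_one.neg.pow n).mul_left_cancel (by linear_combination -h)
  linear_combination -binomialShiftSum_succ_left a n n - hreflect

theorem cast_choose_succ_mul_add_succ (n k : ℕ) :
    ((n + 1).choose k : R) * ((n : R) + k + 1)
      = 2 * ((n : R) + 1) * (n + 1).choose k - ((n : R) + 1) * n.choose k := by
  rcases le_or_gt k (n + 1) with hk | hk
  · have h := congrArg (Nat.cast (R := R)) (Nat.choose_mul_succ_eq n k)
    push_cast [Nat.cast_sub hk] at h
    linear_combination h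
  · simp [Nat.choose_eq_zero_of_lt hk, Nat.choose_eq_zero_of_lt (Nat.lt_of_succ_lt hk)]

theorem IsBinomialSelfDual.sum_choose_mul_add_succ_mul {a : ℕ → R} (ha : IsBinomialSelfDual a)
    (n : ℕ) :
    ∑ k ∈ range (n + 1), ((n + 1).choose k : R) * ((n : R) + k + 1) * a (n + k)
      = -(2 * ((n : R) + 1) * a (2 * n + 1)) := by
  have hsplit : ∑ k ∈ range (n + 1), ((n + 1).choose k : R) * a (n + k)
      = binomialShiftSum a (n + 1) n - a (2 * n + 1) := by
    rw [binomialShiftSum, sum_range_succ _ (n + 1), Nat.choose_self, Nat.cast_one, one_mul,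
      show n + (n + 1) = 2 * n + 1 by ring, add_sub_cancel_right]
  simp_rw [cast_choose_succ_mul_add_succ, sub_mul, sum_sub_distrib, mul_assoc, ← mul_sum]
  rw [hsplit, ← binomialShiftSum, ha.binomialShiftSum_self]
  ring

end BinomialShiftSum

theorem isBinomialSelfDual_bernoulli : IsBinomialSelfDual bernoulli := by
  intro n
  rw [binomialShiftSum, sum_range_succ, Nat.choose_self, Nat.cast_one, one_mul]
  simp only [zero_add]
  rw [sum_bernoulli, ← bernoulli'_eq_bernoulli]
  by_cases hn : n = 1
  · subst hn
    norm_num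
  · simp [hn, bernoulli_eq_bernoulli'_of_ne_one hn]

/-- The von Ettingshausen–Seidel–Kaneko identity: for `n ≥ 1`,
`∑_{k=0}^{n} C(n+1,k) (n+k+1) B_{n+k} = 0`. -/
theorem kaneko_identity (n : ℕ) (hn : 1 ≤ n) :
    ∑ k ∈ Finset.range (n + 1),
        ((n + 1).choose k : ℚ) * ((n : ℚ) + (k : ℚ) + 1) * bernoulli (n + k) = 0 := by
  rw [isBinomialSelfDual_bernoulli.sum_choose_mul_add_succ_mul,
    bernoulli_eq_zero_of_odd (odd_two_mul_add_one n) (by omega)]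
  simp
end
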